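/- arXiv:1511.02467 — 4 statements merged into one kernel-verified Lean document; each statement's English description precedes it below -/
import Mathlib

section
/- Let I be a nonempty set, D an ultrafilter on I, (M i)_{i∈I} a family of monoids, and α i, β i congruences on M i for each i. For a family σ of congruences, let Π_D σ denote the congruence on Π_{i∈I} M i relating a, b iff {i | σ i (a i) (b i)} ∈ D. Then Π_D α = Π_D β if and only if {i ∈ I | α i = β i} ∈ D. -/
/-- The congruence `Π_D σ` on the direct product `Π i, M i`: it relates `a` and `b`
iff `{i | σ i (a i) (b i)} ∈ D`. -/
def prodCon {I : Type*} (D : Ultrafilter I) {M : I → Type*} [∀ i, Monoid (M i)]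
    (σ : ∀ i, Con (M i)) : Con (∀ i, M i) where
  r a b := {i | σ i (a i) (b i)} ∈ D
  iseqv := by
    refine ⟨fun a => ?_, fun h => ?_, fun h1 h2 => ?_⟩
    · exact Filter.mem_of_superset Filter.univ_mem fun i _ => (σ i).refl _
    · exact Filter.mem_of_superset h fun i hi => (σ i).symm hi
    · exact Filter.mem_of_superset (Filter.inter_mem h1 h2) fun i hi => (σ i).trans hi.1 hi.2
  mul' := fun h1 h2 =>
    Filter.mem_of_superset (Filter.inter_mem h1 h2) fun i hi => (σ i).mul hi.1 hi.2

/-- The ultraproduct congruence `D*` on the direct product `Π i, M i`: it relates `a` and `b`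
iff `{i | a i = b i} ∈ D`. -/
def ultraCon {I : Type*} (D : Ultrafilter I) (M : I → Type*) [∀ i, Monoid (M i)] :
    Con (∀ i, M i) where
  r a b := {i | a i = b i} ∈ D
  iseqv := by
    refine ⟨fun a => ?_, fun h => ?_, fun h1 h2 => ?_⟩
    · exact Filter.mem_of_superset Filter.univ_mem fun i _ => rfl
    · exact Filter.mem_of_superset h fun i hi => hi.symm
    · exact Filter.mem_of_superset (Filter.inter_mem h1 h2) fun i hi => hi.1.trans hi.2
  mul' := fun h1 h2 =>
    Filter.mem_of_superset (Filter.inter_mem h1 h2) fun i hi =>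
      show _ = _ by simp only [Pi.mul_apply, Set.mem_inter_iff, Set.mem_setOf_eq] at hi ⊢; rw [hi.1, hi.2]

/-! If `α i ≰ β i` for `D`-almost all `i`, choosing at each such `i` a pair related by `α i` but
not by `β i` gives two elements of the product related by `Π_D α` but not by `Π_D β`. Equality
then follows by antisymmetry, `D` being closed under finite intersections. -/

open Filter

theorem prodCon_le_prodCon_iff {I : Type*} (D : Ultrafilter I) {M : I → Type*}
    [∀ i, Monoid (M i)] (α β : ∀ i, Con (M i)) :
    prodCon D α ≤ prodCon D β ↔ {i | α i ≤ β i} ∈ D := by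
  refine ⟨fun h => ?_, fun h a b hab => mem_of_superset (inter_mem h hab) fun i hi => hi.1 hi.2⟩
  by_contra hle
  have hbad : ∀ᶠ i in (D : Filter I), ∃ p : M i × M i, α i p.1 p.2 ∧ ¬ β i p.1 p.2 := by
    filter_upwards [Ultrafilter.compl_mem_iff_notMem.2 hle] with i hi
    simpa [Con.le_def] using hi
  obtain ⟨p, hp⟩ := skolem.1 hbad
  have hβ : prodCon D β (fun i => (p i).1) (fun i => (p i).2) := h (hp.mono fun _ => And.left)
  obtain ⟨i, hi, hiβ⟩ := (hp.and hβ).exists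
  exact hi.2 hiβ

theorem prodCon_eq_iff_general {I : Type*} (D : Ultrafilter I) (M : I → Type*)
    [∀ i, Monoid (M i)] (α β : ∀ i, Con (M i)) :
    prodCon D α = prodCon D β ↔ {i | α i = β i} ∈ D := by
  rw [le_antisymm_iff, prodCon_le_prodCon_iff, prodCon_le_prodCon_iff, ← Ultrafilter.mem_coe,
    ← Ultrafilter.mem_coe, ← inter_mem_iff, ← Set.ofPred_and]
  simp only [← le_antisymm_iff, Ultrafilter.mem_coe]

/-- `Π_D α = Π_D β` iff `{i | α i = β i} ∈ D` (injectivity part of the embedding theorem). -/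
theorem prodCon_eq_iff {I : Type*} [Nonempty I] (D : Ultrafilter I) (M : I → Type*)
    [∀ i, Monoid (M i)] (α β : ∀ i, Con (M i)) :
    prodCon D α = prodCon D β ↔ {i | α i = β i} ∈ D :=
  prodCon_eq_iff_general D M α β
end

section
/- Let I be a nonempty set, D an ultrafilter on I, (M i)_{i∈I} a family of monoids, and σ i a congruence on M i for each i. Let D* be the ultraproduct congruence on Π_{i∈I} M i, let Π_D σ be the congruence on Π_{i∈I} M i relating a, b iff {i | σ i (a i) (b i)} ∈ D (so D* ≤ Π_D σ), and let c be the congruence on the ultraproduct Π_D(M i) := (Π M i) ⧸ D* induced by Π_D σ via the correspondence theorem (the image of Π_D σ under the surjective quotient homomorphism, i.e., c relates the D*-classes of a and b iff Π_D σ relates a and b). Then the quotient monoid (Π_D(M i)) ⧸ c is isomorphic as a monoid to the ultraproduct Π_D(M i ⧸ σ i) := (Π_{i∈I} (M i ⧸ σ i)) ⧸ D*. -/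
theorem Con.eq_ker_map_of_forall_iff {N : Type*} [MulOneClass N] {d e : Con N} (hde : d ≤ e)
    {c : Con d.Quotient} (hc : ∀ a b : N, c a b ↔ e a b) : c = Con.ker (d.map e hde) :=
  Con.ext fun x y => Con.induction_on₂ x y fun a b => (hc a b).trans (Con.eq e).symm

section Ultraproduct

variable {I : Type*} (D : Ultrafilter I) {M : I → Type*} [∀ i, Monoid (M i)]

theorem ultraCon_le_prodCon (σ : ∀ i, Con (M i)) : ultraCon D M ≤ prodCon D σ :=
  fun a b h => Filter.mem_of_superset h fun i (hi : a i = b i) =>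
    show σ i (a i) (b i) from hi ▸ (σ i).refl (a i)

theorem ultraCon_mk'_comp_piMap_surjective {N : I → Type*} [∀ i, Monoid (N i)]
    {g : ∀ i, M i →* N i} (hg : ∀ i, Function.Surjective (g i)) :
    Function.Surjective ((ultraCon D N).mk'.comp (MonoidHom.piMap g)) :=
  Con.mk'_surjective.comp (Function.Surjective.piMap hg)

theorem ker_ultraCon_mk'_comp_piMap_mk' (σ : ∀ i, Con (M i)) :
    Con.ker ((ultraCon D fun i => (σ i).Quotient).mk'.comp (MonoidHom.piMap fun i => (σ i).mk')) =
      prodCon D σ :=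
  Con.ext fun a b => (Con.eq _).trans <| by
    change {i | (a i : (σ i).Quotient) = b i} ∈ D ↔ {i | σ i (a i) (b i)} ∈ D
    simp only [Con.eq]

noncomputable def prodConQuotientEquiv (σ : ∀ i, Con (M i)) :
    (prodCon D σ).Quotient ≃* (ultraCon D fun i => (σ i).Quotient).Quotient :=
  (Con.congr (.refl _) (by rw [← ker_ultraCon_mk'_comp_piMap_mk']; rfl)).trans
    (Con.quotientKerEquivOfSurjective _
      (ultraCon_mk'_comp_piMap_surjective D fun i => (σ i).mk'_surjective))

end Ultraproduct

theorem quotient_induced_iso_ultraproduct_general {I : Type*} (D : Ultrafilter I)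
    (M : I → Type*) [∀ i, Monoid (M i)] (σ : ∀ i, Con (M i))
    (c : Con (ultraCon D M).Quotient)
    (hc : ∀ a b : ∀ i, M i,
      c (a : (ultraCon D M).Quotient) (b : (ultraCon D M).Quotient) ↔ prodCon D σ a b) :
    Nonempty (c.Quotient ≃* (ultraCon D (fun i => (σ i).Quotient)).Quotient) := by
  have hle := ultraCon_le_prodCon D σ
  obtain rfl := Con.eq_ker_map_of_forall_iff hle hc
  exact ⟨(Con.quotientQuotientEquivQuotient _ _ hle).trans (prodConQuotientEquiv D σ)⟩

/-- Theorem 2 (for monoids): if `c` is the congruence induced on the ultraproduct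
`(Π i, M i) ⧸ D*` by `Π_D σ` via the correspondence theorem, then the quotient of the
ultraproduct by `c` is isomorphic to the ultraproduct of the quotient monoids. -/
theorem quotient_induced_iso_ultraproduct {I : Type*} [Nonempty I] (D : Ultrafilter I)
    (M : I → Type*) [∀ i, Monoid (M i)] (σ : ∀ i, Con (M i))
    (c : Con (ultraCon D M).Quotient)
    (hc : ∀ a b : ∀ i, M i,
      c (a : (ultraCon D M).Quotient) (b : (ultraCon D M).Quotient) ↔ prodCon D σ a b) :
    Nonempty (c.Quotient ≃* (ultraCon D (fun i => (σ i).Quotient)).Quotient) :=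
  quotient_induced_iso_ultraproduct_general D M σ c hc
end

section
/- Let I be a nonempty set, D an ultrafilter on I, A a monoid, and σ i a congruence on A for each i ∈ I. Then the congruence r on A defined by r a b ↔ {i ∈ I | σ i a b} ∈ D equals the lattice supremum ⨆_{K ∈ D} ⨅_{k ∈ K} σ k taken in the complete lattice of congruences on A; that is, the supremum of the congruences ⨅_{k∈K} σ k over all sets K in the ultrafilter D is given pointwise by: a and b are related iff {i | σ i a b} ∈ D. -/
/-! If `a` and `b` are `r`-related, they are already related by `⨅ k ∈ K, σ k` for the set
`K = {i | σ i a b} ∈ D`; conversely, a pair related by `⨅ k ∈ K, σ k` with `K ∈ D` is related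
by `σ i` on all of `K`, hence on a set in `D`. -/

def rCon {I : Type*} (D : Ultrafilter I) {A : Type*} [Monoid A] (σ : I → Con A) : Con A where
  r a b := {i | σ i a b} ∈ D
  iseqv := by
    refine ⟨fun a => ?_, fun h => ?_, fun h1 h2 => ?_⟩
    · exact Filter.mem_of_superset Filter.univ_mem fun i _ => (σ i).refl _
    · exact Filter.mem_of_superset h fun i hi => (σ i).symm hi
    · exact Filter.mem_of_superset (Filter.inter_mem h1 h2) fun i hi => (σ i).trans hi.1 hi.2
  mul' := fun h1 h2 =>
    Filter.mem_of_superset (Filter.inter_mem h1 h2) fun i hi => (σ i).mul hi.1 hi.2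

theorem Con.iInf₂_apply {M ι : Type*} [Mul M] (s : Set ι) (c : ι → Con M) (x y : M) :
    (⨅ i ∈ s, c i) x y ↔ ∀ i ∈ s, c i x y := by
  simp only [Con.coe_iInf, iInf_apply, iInf_Prop_eq]

section

variable {I A : Type*} [Monoid A] (D : Ultrafilter I) (σ : I → Con A)

theorem iInf₂_le_rCon {K : Set I} (hK : K ∈ D) : ⨅ k ∈ K, σ k ≤ rCon D σ :=
  fun _ _ h => Filter.mem_of_superset hK fun k hk => (Con.iInf₂_apply K σ _ _).1 h k hk

theorem rCon_le_iSup₂_iInf₂ : rCon D σ ≤ ⨆ K ∈ D, ⨅ k ∈ K, σ k := fun a b h =>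
  le_iSup₂ (f := fun K (_ : K ∈ D) => ⨅ k ∈ K, σ k) {i | σ i a b} h
    ((Con.iInf₂_apply _ σ a b).2 fun _ hk => hk)

end

theorem rCon_eq_iSup_iInf_general {I : Type*} (D : Ultrafilter I) (A : Type*) [Monoid A]
    (σ : I → Con A) :
    rCon D σ = ⨆ K ∈ D, ⨅ k ∈ K, σ k :=
  le_antisymm (rCon_le_iSup₂_iInf₂ D σ) (iSup₂_le fun _ hK => iInf₂_le_rCon D σ hK)

/-- Theorem 3 (for monoids): the congruence relating `a, b` iff `{i | σ i a b} ∈ D` equals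
`⨆ K ∈ D, ⨅ k ∈ K, σ k` in the complete lattice of congruences on `A`. -/
theorem rCon_eq_iSup_iInf {I : Type*} [Nonempty I] (D : Ultrafilter I) (A : Type*) [Monoid A]
    (σ : I → Con A) :
    rCon D σ = ⨆ K ∈ D, ⨅ k ∈ K, σ k :=
  rCon_eq_iSup_iInf_general D A σ
end

section
/- Let I be a nonempty set, D an ultrafilter on I, and A a monoid, and σ i a congruence on A for each i ∈ I. Let Π_D σ be the congruence on the direct power Π_{i∈I} A (with A in every coordinate) relating a, b iff {i | σ i (a i) (b i)} ∈ D, and let ξ : A → Π_{i∈I} A be the diagonal monoid homomorphism sending a to the constant family with value a. Then the comap (pullback) of Π_D σ along ξ equals ⨆_{K ∈ D} ⨅_{k ∈ K} σ k in the complete lattice of congruences on A; equivalently, the restriction of the congruence Π_D σ to the diagonally embedded copy of A is ⨆_{K∈D} ⨅_{k∈K} σ k. -/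
theorem Con.biInf_apply {M ι : Type*} [Mul M] (s : Set ι) (σ : ι → Con M) (x y : M) :
    (⨅ i ∈ s, σ i) x y ↔ ∀ i ∈ s, σ i x y := by
  simp only [Con.coe_iInf, iInf_apply, iInf_Prop_eq]

theorem comap_prodCon_diagonal_general {I : Type*} (D : Ultrafilter I) (A : Type*)
    [Monoid A] (σ : I → Con A) :
    Con.comap (⇑(Pi.monoidHom (fun _ : I => MonoidHom.id A)))
        (map_mul (Pi.monoidHom (fun _ : I => MonoidHom.id A)))
        (prodCon D (M := fun _ : I => A) σ) =
      ⨆ K ∈ D, ⨅ k ∈ K, σ k := by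
  apply le_antisymm
  · intro x y (hxy : {i | σ i x y} ∈ D)
    exact le_iSup₂ (f := fun K (_ : K ∈ D) => ⨅ k ∈ K, σ k) _ hxy
      ((Con.biInf_apply _ σ x y).mpr fun _ hk => hk)
  · exact iSup₂_le fun K hK x y hxy =>
      Filter.mem_of_superset hK fun k hk => (Con.biInf_apply K σ x y).mp hxy k hk

/-- Theorem 3 (for monoids): the restriction (comap along the diagonal embedding
`ξ : A →* Π i, A`) of the congruence `Π_D σ` on the direct power `Π i, A` equals
`⨆ K ∈ D, ⨅ k ∈ K, σ k` in the complete lattice of congruences on `A`. -/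
theorem comap_prodCon_diagonal {I : Type*} [Nonempty I] (D : Ultrafilter I) (A : Type*)
    [Monoid A] (σ : I → Con A) :
    Con.comap (⇑(Pi.monoidHom (fun _ : I => MonoidHom.id A)))
        (map_mul (Pi.monoidHom (fun _ : I => MonoidHom.id A)))
        (prodCon D (M := fun _ : I => A) σ) =
      ⨆ K ∈ D, ⨅ k ∈ K, σ k :=
  comap_prodCon_diagonal_general D A σ
end
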